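/- If e^{iλ} ∈ σ(U) for λ ∈ [0,2π), then the two one-dimensional subspaces of ℂ² appearing in the main theorem coincide: ker((∏_{i=0}^{n_+−1} T_i^+(λ) − ζ_+^<·I)·T_+) = ker((∏_{i=0}^{n_−−1} T_i^−(λ) − ζ_−^>·I)·T_−). -/

import Mathlib

open scoped Real

/-- The coin matrix `C = e^{iΔ}[[α, β], [−conj β, conj α]]`. -/
noncomputable def coinM (a b : ℂ) (d : ℝ) : Matrix (Fin 2) (Fin 2) ℂ :=
  Complex.exp (Complex.I * d) • !![a, b; -(starRingEnd ℂ b), starRingEnd ℂ a]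

/-- The transfer matrix `T(λ) = (1/α)[[e^{i(λ−Δ)}, −β], [−conj β, e^{−i(λ−Δ)}]]`. -/
noncomputable def transferM (a b : ℂ) (d l : ℝ) : Matrix (Fin 2) (Fin 2) ℂ :=
  a⁻¹ • !![Complex.exp (Complex.I * (l - d)), -b;
           -(starRingEnd ℂ b), Complex.exp (-(Complex.I * (l - d)))]

/-- Square-summability of `Ψ : ℤ → ℂ²`, i.e. `Σ_{x∈ℤ} ‖Ψ(x)‖²_{ℂ²} < ∞`. -/
def SqSummable (Ψ : ℤ → Fin 2 → ℂ) : Prop :=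
  Summable fun x : ℤ => ‖Ψ x 0‖ ^ 2 + ‖Ψ x 1‖ ^ 2

/-- The time evolution `U = SC`:  `(UΨ)(x) = ((C_{x+1}Ψ(x+1))_L, (C_{x−1}Ψ(x−1))_R)ᵀ`. -/
noncomputable def Uact (C : ℤ → Matrix (Fin 2) (Fin 2) ℂ) (Ψ : ℤ → Fin 2 → ℂ) :
    ℤ → Fin 2 → ℂ :=
  fun x => ![(C (x + 1)).mulVec (Ψ (x + 1)) 0, (C (x - 1)).mulVec (Ψ (x - 1)) 1]

/-- The inverse of the unitary `J`:  `(J⁻¹Ψ)(x) = (Ψ_L(x+1), Ψ_R(x))ᵀ`. -/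
def JinvAct (Ψ : ℤ → Fin 2 → ℂ) : ℤ → Fin 2 → ℂ := fun x => ![Ψ (x + 1) 0, Ψ x 1]

/-- Ordered product `∏_{i=0}^{n-1} T_i = T_{n-1} ⋯ T_1 T_0`. -/
noncomputable def prodRev (T : ℕ → Matrix (Fin 2) (Fin 2) ℂ) : ℕ → Matrix (Fin 2) (Fin 2) ℂ
  | 0 => 1
  | n + 1 => T n * prodRev T n

/-- `T_{n−1} T_{n−2} ⋯ T_1 T_0` for matrices indexed by `ℤ`. -/
noncomputable def prodZpos (T : ℤ → Matrix (Fin 2) (Fin 2) ℂ) :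
    ℕ → Matrix (Fin 2) (Fin 2) ℂ
  | 0 => 1
  | n + 1 => T n * prodZpos T n

/-- `T_{−n}⁻¹ T_{−n+1}⁻¹ ⋯ T_{−2}⁻¹ T_{−1}⁻¹` for matrices indexed by `ℤ`. -/
noncomputable def prodZneg (T : ℤ → Matrix (Fin 2) (Fin 2) ℂ) :
    ℕ → Matrix (Fin 2) (Fin 2) ℂ
  | 0 => 1
  | n + 1 => (T (-(n + 1 : ℕ)))⁻¹ * prodZneg T n

/-- `A = (1/2)·α_0⋯α_{n−1}·tr(∏_{i=0}^{n−1} T_i)` (a real number, taken via its real part). -/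
noncomputable def Adef (αs : ℕ → ℂ) (Ts : ℕ → Matrix (Fin 2) (Fin 2) ℂ) (n : ℕ) : ℝ :=
  ((1 / 2 : ℂ) * (∏ i ∈ Finset.range n, αs i) * (prodRev Ts n).trace).re

/-- `ζ^< = (A − sgn(A)·√(A² − |α_0|²⋯|α_{n−1}|²))/(α_0⋯α_{n−1})`. -/
noncomputable def zetaLT (αs : ℕ → ℂ) (Ts : ℕ → Matrix (Fin 2) (Fin 2) ℂ) (n : ℕ) : ℂ :=
  ((Adef αs Ts n : ℂ) -
      ((Real.sign (Adef αs Ts n) *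
        Real.sqrt ((Adef αs Ts n) ^ 2 - ∏ i ∈ Finset.range n, ‖αs i‖ ^ 2) : ℝ) : ℂ)) /
    ∏ i ∈ Finset.range n, αs i

/-- `ζ^> = (A + sgn(A)·√(A² − |α_0|²⋯|α_{n−1}|²))/(α_0⋯α_{n−1})`. -/
noncomputable def zetaGT (αs : ℕ → ℂ) (Ts : ℕ → Matrix (Fin 2) (Fin 2) ℂ) (n : ℕ) : ℂ :=
  ((Adef αs Ts n : ℂ) +
      ((Real.sign (Adef αs Ts n) *
        Real.sqrt ((Adef αs Ts n) ^ 2 - ∏ i ∈ Finset.range n, ‖αs i‖ ^ 2) : ℝ) : ℂ)) /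
    ∏ i ∈ Finset.range n, αs i

/-!
Let `Ψ` be an eigenvector of `U` for `e^{iλ}`. The vectors `v(x) = (Ψ_L(x-1), Ψ_R(x))` satisfy
`v(x+1) = T_x(λ) v(x)`, so `v(0) ≠ 0`, `v(x_+) = T_+ v(0)`, `v(x_-) = T_- v(0)`, and square
summability gives `v(x) → 0` as `|x| → ∞`. On the right, `v(x_+ + m n_+) = P^m v(x_+)` for the
monodromy `P = ∏ T_i^+`, whose determinant `conj p / p` (`p = α_0^+ ⋯ α_{n_+-1}^+`) is unimodular
and whose trace is `2A/p` with `A` real. If `A² ≤ |p|²` both eigenvalues of `P` are unimodular,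
which is incompatible with a nonzero decaying orbit; otherwise they are `ζ^<` and `ζ^>` with
`|ζ^<| < 1 < |ζ^>|`, and decay forces `v(x_+) ∈ ker(P - ζ^<)`. Symmetrically, the backward orbit
`v(x_- - m n_-)` forces `v(x_-) ∈ ker(P_- - ζ_-^>)`. Neither matrix is zero (`|ζ| ≠ 1 = |det P|`),
so both kernels in the statement are lines through `v(0)`.
-/

open Matrix Filter Topology ComplexConjugate

section Dynamics

variable {𝕜 : Type*} [NormedField 𝕜] {n : Type*} [Fintype n] [DecidableEq n]

theorem eq_zero_of_monotone_norm_of_tendsto_zero {E : Type*} [NormedAddCommGroup E]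
    {u : ℕ → E} (hmono : Monotone fun m => ‖u m‖) (hlim : Tendsto u atTop (𝓝 0)) (m : ℕ) :
    u m = 0 :=
  norm_le_zero_iff.mp (by simpa using hmono.ge_of_tendsto hlim.norm m)

theorem sub_smul_one_mulVec (P : Matrix n n 𝕜) (a : 𝕜) (x : n → 𝕜) :
    (P - a • 1) *ᵥ x = P *ᵥ x - a • x := by
  rw [sub_mulVec, smul_mulVec, one_mulVec]

theorem mulVec_sub_smul_one_mulVec_eq_smul {P : Matrix n n 𝕜} {a b : 𝕜}
    (hfac : (P - a • 1) * (P - b • 1) = 0) (x : n → 𝕜) :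
    P *ᵥ ((P - b • 1) *ᵥ x) = a • ((P - b • 1) *ᵥ x) := by
  rw [← sub_eq_zero, ← sub_smul_one_mulVec, mulVec_mulVec, hfac, zero_mulVec]

theorem sub_smul_one_mulVec_comm (P : Matrix n n 𝕜) (b : 𝕜) (x : n → 𝕜) :
    (P - b • 1) *ᵥ (P *ᵥ x) = P *ᵥ ((P - b • 1) *ᵥ x) := by
  simp only [sub_smul_one_mulVec, mulVec_sub, mulVec_smul]

/-- Each `(P - a) w m` is a `b`-eigenvector, so its norm cannot decrease along the orbit. -/
theorem sub_smul_one_mulVec_eq_zero_of_forward {P : Matrix n n 𝕜} {a b : 𝕜}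
    (hfac : (P - a • 1) * (P - b • 1) = 0) (hb : 1 ≤ ‖b‖) {w : ℕ → n → 𝕜}
    (hw : ∀ m, w (m + 1) = P *ᵥ w m) (hlim : Tendsto w atTop (𝓝 0)) (m : ℕ) :
    (P - a • 1) *ᵥ w m = 0 := by
  have hfac' : (P - b • 1) * (P - a • 1) = 0 := by
    have hcomm : Commute (P - b • 1) (P - a • 1) :=
      ((Commute.refl P).sub_right ((Commute.one_right P).smul_right a)).sub_left
        ((Commute.one_left _).smul_left b)
    rw [hcomm.eq, hfac]
  refine eq_zero_of_monotone_norm_of_tendsto_zero (u := fun m => (P - a • 1) *ᵥ w m)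
    (monotone_nat_of_le_succ fun m => ?_) ?_ m
  · rw [hw, sub_smul_one_mulVec_comm, mulVec_sub_smul_one_mulVec_eq_smul hfac', norm_smul]
    exact le_mul_of_one_le_left (norm_nonneg _) hb
  · exact ((continuous_const.matrix_mulVec continuous_id).tendsto' 0 0 (mulVec_zero _)).comp hlim

theorem eq_zero_of_forward_of_one_le_norm {P : Matrix n n 𝕜} {a b : 𝕜}
    (hfac : (P - a • 1) * (P - b • 1) = 0) (ha : 1 ≤ ‖a‖) (hb : 1 ≤ ‖b‖) {w : ℕ → n → 𝕜}
    (hw : ∀ m, w (m + 1) = P *ᵥ w m) (hlim : Tendsto w atTop (𝓝 0)) (m : ℕ) : w m = 0 := by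
  refine eq_zero_of_monotone_norm_of_tendsto_zero (monotone_nat_of_le_succ fun m => ?_) hlim m
  have hker := sub_smul_one_mulVec_eq_zero_of_forward hfac hb hw hlim m
  rw [sub_smul_one_mulVec, sub_eq_zero] at hker
  rw [hw, hker, norm_smul]
  exact le_mul_of_one_le_left (norm_nonneg _) ha

theorem sub_smul_one_mulVec_eq_zero_of_backward {P : Matrix n n 𝕜} {a b : 𝕜}
    (hfac : (P - a • 1) * (P - b • 1) = 0) (ha : ‖a‖ ≤ 1) {w : ℕ → n → 𝕜}
    (hw : ∀ m, w m = P *ᵥ w (m + 1)) (hlim : Tendsto w atTop (𝓝 0)) (m : ℕ) :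
    (P - b • 1) *ᵥ w m = 0 := by
  refine eq_zero_of_monotone_norm_of_tendsto_zero (u := fun m => (P - b • 1) *ᵥ w m)
    (monotone_nat_of_le_succ fun m => ?_) ?_ m
  · rw [hw m, sub_smul_one_mulVec_comm, mulVec_sub_smul_one_mulVec_eq_smul hfac, norm_smul]
    exact mul_le_of_le_one_left (norm_nonneg _) ha
  · exact ((continuous_const.matrix_mulVec continuous_id).tendsto' 0 0 (mulVec_zero _)).comp hlim

theorem eq_zero_of_backward_of_norm_le_one {P : Matrix n n 𝕜} {a b : 𝕜}
    (hfac : (P - a • 1) * (P - b • 1) = 0) (ha : ‖a‖ ≤ 1) (hb : ‖b‖ ≤ 1) {w : ℕ → n → 𝕜}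
    (hw : ∀ m, w m = P *ᵥ w (m + 1)) (hlim : Tendsto w atTop (𝓝 0)) (m : ℕ) : w m = 0 := by
  refine eq_zero_of_monotone_norm_of_tendsto_zero (monotone_nat_of_le_succ fun m => ?_) hlim m
  have hker := sub_smul_one_mulVec_eq_zero_of_backward hfac ha hw hlim (m + 1)
  rw [sub_smul_one_mulVec, sub_eq_zero] at hker
  rw [hw m, hker, norm_smul]
  exact mul_le_of_le_one_left (norm_nonneg _) hb

end Dynamics

open Polynomial in
theorem Matrix.sub_smul_one_mul_sub_smul_one_eq_zero {R : Type*} [CommRing R] [Nontrivial R]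
    (M : Matrix (Fin 2) (Fin 2) R) {a b : R} (hs : a + b = M.trace) (hp : a * b = M.det) :
    (M - a • 1) * (M - b • 1) = 0 := by
  have hCH : M * M - M.trace • M + M.det • 1 = 0 := by
    simpa [charpoly_fin_two, Algebra.algebraMap_eq_smul_one, sq] using M.aeval_self_charpoly
  simp only [sub_mul, mul_sub, smul_mul_assoc, mul_smul_comm, one_mul, mul_one]
  linear_combination (norm := module) hCH - hs • M + hp • (1 : Matrix (Fin 2) (Fin 2) R)

section Quadratic

variable {M : Matrix (Fin 2) (Fin 2) ℂ} {p : ℂ} {A : ℝ}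

/-- Substituting `ζ = ξ / p` turns the characteristic polynomial `ζ² - (2A/p) ζ + conj p / p`
into `(ξ² - 2Aξ + ‖p‖²) / p²`. -/
theorem sub_div_smul_one_mul_eq_zero (hp : p ≠ 0) (htr : M.trace = 2 * A / p)
    (hdet : M.det = conj p / p) {ξ₁ ξ₂ : ℂ} (hs : ξ₁ + ξ₂ = 2 * A)
    (hprod : ξ₁ * ξ₂ = (‖p‖ ^ 2 : ℝ)) :
    (M - (ξ₁ / p) • 1) * (M - (ξ₂ / p) • 1) = 0 := by
  refine M.sub_smul_one_mul_sub_smul_one_eq_zero ?_ ?_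
  · rw [htr, ← hs, add_div]
  · rw [hdet, div_mul_div_comm, hprod, Complex.ofReal_pow, ← Complex.mul_conj',
      mul_div_mul_left _ _ hp]

theorem exists_sub_smul_one_mul_eq_zero_of_sq_le (hp : p ≠ 0) (htr : M.trace = 2 * A / p)
    (hdet : M.det = conj p / p) (hA : A ^ 2 ≤ ‖p‖ ^ 2) :
    ∃ a b : ℂ, ‖a‖ = 1 ∧ ‖b‖ = 1 ∧ (M - a • 1) * (M - b • 1) = 0 := by
  set t := √(‖p‖ ^ 2 - A ^ 2)
  have ht : t ^ 2 = ‖p‖ ^ 2 - A ^ 2 := Real.sq_sqrt (by linarith)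
  have hnorm : ∀ ε : ℝ, ε ^ 2 = 1 → ‖((A + ε * t * Complex.I : ℂ)) / p‖ = 1 := by
    intro ε hε
    rw [norm_div, div_eq_one_iff_eq (norm_ne_zero_iff.mpr hp), ← Complex.ofReal_mul,
      Complex.norm_add_mul_I, mul_pow, hε, one_mul, ht, add_sub_cancel,
      Real.sqrt_sq (norm_nonneg p)]
  refine ⟨_, _, hnorm 1 (one_pow 2), hnorm (-1) (by norm_num),
    sub_div_smul_one_mul_eq_zero hp htr hdet (by push_cast; ring) ?_⟩
  have ht' : (t : ℂ) ^ 2 = (‖p‖ : ℂ) ^ 2 - (A : ℂ) ^ 2 := by exact_mod_cast ht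
  push_cast
  linear_combination (-(t : ℂ) ^ 2) * Complex.I_sq + ht'

end Quadratic

theorem hyperbolic_roots {A q : ℝ} (hq : 0 < q) (hA : q ^ 2 < A ^ 2) :
    (A - Real.sign A * √(A ^ 2 - q ^ 2)) * (A + Real.sign A * √(A ^ 2 - q ^ 2)) = q ^ 2 ∧
      |A - Real.sign A * √(A ^ 2 - q ^ 2)| < q ∧ q < |A + Real.sign A * √(A ^ 2 - q ^ 2)| := by
  have ht := Real.sq_sqrt (sub_nonneg.mpr hA.le)
  have htpos : 0 < √(A ^ 2 - q ^ 2) := Real.sqrt_pos.mpr (sub_pos.mpr hA)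
  set t := √(A ^ 2 - q ^ 2)
  rcases lt_or_gt_of_ne (show A ≠ 0 by rintro rfl; nlinarith) with hneg | hpos
  · rw [Real.sign_of_neg hneg, abs_lt, lt_abs]
    refine ⟨by linear_combination -ht, ⟨?_, ?_⟩, Or.inr ?_⟩ <;> nlinarith [mul_pos htpos hq]
  · rw [Real.sign_of_pos hpos, abs_lt, lt_abs]
    refine ⟨by linear_combination -ht, ⟨?_, ?_⟩, Or.inl ?_⟩ <;> nlinarith [mul_pos htpos hq]

theorem norm_conj_div_self {p : ℂ} (hp : p ≠ 0) : ‖conj p / p‖ = 1 := by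
  rw [norm_div, Complex.norm_conj, div_self (norm_ne_zero_iff.mpr hp)]

theorem sub_smul_one_ne_zero {𝕜 : Type*} [NormedField 𝕜] {n : Type*} [Fintype n] [DecidableEq n]
    [Nonempty n] {M : Matrix n n 𝕜} (hM : ‖M.det‖ = 1) {c : 𝕜} (hc : ‖c‖ ≠ 1) : M - c • 1 ≠ 0 := by
  intro h
  rw [sub_eq_zero.mp h, det_smul, det_one, mul_one, norm_pow,
    pow_eq_one_iff_of_nonneg (norm_nonneg c) Fintype.card_ne_zero] at hM
  exact hc hM

section Monodromy

variable {M : Matrix (Fin 2) (Fin 2) ℂ} {αs : ℕ → ℂ} {Ts : ℕ → Matrix (Fin 2) (Fin 2) ℂ} {n : ℕ}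
  (hp : ∏ i ∈ Finset.range n, αs i ≠ 0)
  (htr : M.trace = 2 * Adef αs Ts n / ∏ i ∈ Finset.range n, αs i)
  (hdet : M.det = conj (∏ i ∈ Finset.range n, αs i) / ∏ i ∈ Finset.range n, αs i)
include hp htr hdet

theorem zetaLT_zetaGT_of_sq_lt (hA : ‖∏ i ∈ Finset.range n, αs i‖ ^ 2 < Adef αs Ts n ^ 2) :
    (M - zetaLT αs Ts n • 1) * (M - zetaGT αs Ts n • 1) = 0 ∧
      ‖zetaLT αs Ts n‖ < 1 ∧ 1 < ‖zetaGT αs Ts n‖ := by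
  set p := ∏ i ∈ Finset.range n, αs i
  set A := Adef αs Ts n
  have hq : ∏ i ∈ Finset.range n, ‖αs i‖ ^ 2 = ‖p‖ ^ 2 := by rw [norm_prod, Finset.prod_pow]
  obtain ⟨hprod, hlo, hhi⟩ := hyperbolic_roots (norm_pos_iff.mpr hp) hA
  have hLT : zetaLT αs Ts n = ((A - Real.sign A * √(A ^ 2 - ‖p‖ ^ 2) : ℝ) : ℂ) / p := by
    rw [zetaLT, hq]; push_cast; rfl
  have hGT : zetaGT αs Ts n = ((A + Real.sign A * √(A ^ 2 - ‖p‖ ^ 2) : ℝ) : ℂ) / p := by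
    rw [zetaGT, hq]; push_cast; rfl
  have hnorm (x : ℝ) : ‖(x : ℂ) / p‖ = |x| / ‖p‖ := by
    rw [norm_div, Complex.norm_real, Real.norm_eq_abs]
  rw [hLT, hGT, hnorm, hnorm, div_lt_one (norm_pos_iff.mpr hp), one_lt_div (norm_pos_iff.mpr hp)]
  refine ⟨sub_div_smul_one_mul_eq_zero hp htr hdet (by push_cast; ring) ?_, hlo, hhi⟩
  rw [← Complex.ofReal_mul, hprod]

theorem elliptic_or_hyperbolic :
    (∃ a b : ℂ, ‖a‖ = 1 ∧ ‖b‖ = 1 ∧ (M - a • 1) * (M - b • 1) = 0) ∨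
      ((M - zetaLT αs Ts n • 1) * (M - zetaGT αs Ts n • 1) = 0 ∧
        ‖zetaLT αs Ts n‖ < 1 ∧ 1 < ‖zetaGT αs Ts n‖) :=
  (le_or_gt (Adef αs Ts n ^ 2) (‖∏ i ∈ Finset.range n, αs i‖ ^ 2)).imp
    (exists_sub_smul_one_mul_eq_zero_of_sq_le hp htr hdet) (zetaLT_zetaGT_of_sq_lt hp htr hdet)

theorem sub_zetaLT_ne_zero_and_mulVec_eq_zero {w : ℕ → Fin 2 → ℂ} (hw : ∀ m, w (m + 1) = M *ᵥ w m)
    (hlim : Tendsto w atTop (𝓝 0)) (hw0 : w 0 ≠ 0) :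
    M - zetaLT αs Ts n • 1 ≠ 0 ∧ (M - zetaLT αs Ts n • 1) *ᵥ w 0 = 0 := by
  rcases elliptic_or_hyperbolic hp htr hdet with ⟨a, b, ha, hb, hfac⟩ | ⟨hfac, hlo, hhi⟩
  · exact absurd (eq_zero_of_forward_of_one_le_norm hfac ha.ge hb.ge hw hlim 0) hw0
  · exact ⟨sub_smul_one_ne_zero (hdet ▸ norm_conj_div_self hp) hlo.ne,
      sub_smul_one_mulVec_eq_zero_of_forward hfac hhi.le hw hlim 0⟩

theorem sub_zetaGT_ne_zero_and_mulVec_eq_zero {w : ℕ → Fin 2 → ℂ} (hw : ∀ m, w m = M *ᵥ w (m + 1))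
    (hlim : Tendsto w atTop (𝓝 0)) (hw0 : w 0 ≠ 0) :
    M - zetaGT αs Ts n • 1 ≠ 0 ∧ (M - zetaGT αs Ts n • 1) *ᵥ w 0 = 0 := by
  rcases elliptic_or_hyperbolic hp htr hdet with ⟨a, b, ha, hb, hfac⟩ | ⟨hfac, hlo, hhi⟩
  · exact absurd (eq_zero_of_backward_of_norm_le_one hfac ha.le hb.le hw hlim 0) hw0
  · exact ⟨sub_smul_one_ne_zero (hdet ▸ norm_conj_div_self hp) hhi.ne',
      sub_smul_one_mulVec_eq_zero_of_backward hfac hlo.le hw hlim 0⟩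

end Monodromy

theorem det_transferM {a b : ℂ} (d l : ℝ) (ha : a ≠ 0) (hab : ‖a‖ ^ 2 + ‖b‖ ^ 2 = 1) :
    (transferM a b d l).det = conj a / a := by
  have hexp : Complex.exp (Complex.I * (l - d)) * Complex.exp (-(Complex.I * (l - d))) = 1 := by
    rw [← Complex.exp_add, add_neg_cancel, Complex.exp_zero]
  have hab' : a * conj a + b * conj b = 1 := by
    rw [Complex.mul_conj', Complex.mul_conj']; exact_mod_cast hab
  rw [transferM, det_smul, det_fin_two_of, Fintype.card_fin, eq_div_iff ha]
  field_simp
  linear_combination hexp - hab'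

theorem prod_range_ne_zero {M₀ : Type*} [CommMonoidWithZero M₀] [Nontrivial M₀] [NoZeroDivisors M₀]
    {f : ℕ → M₀} {n : ℕ} (h : ∀ k < n, f k ≠ 0) : ∏ i ∈ Finset.range n, f i ≠ 0 :=
  Finset.prod_ne_zero_iff.mpr fun k hk => h k (Finset.mem_range.mp hk)

theorem prodRev_mem (S : Submonoid (Matrix (Fin 2) (Fin 2) ℂ)) {T : ℕ → Matrix (Fin 2) (Fin 2) ℂ}
    {n : ℕ} (hT : ∀ k < n, T k ∈ S) : prodRev T n ∈ S := by
  induction n with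
  | zero => exact S.one_mem
  | succ n ih =>
    exact S.mul_mem (hT n n.lt_succ_self) (ih fun k hk => hT k (hk.trans n.lt_succ_self))

theorem prodRev_smul (a : ℕ → ℂ) (T : ℕ → Matrix (Fin 2) (Fin 2) ℂ) (n : ℕ) :
    prodRev (fun k => a k • T k) n = (∏ i ∈ Finset.range n, a i) • prodRev T n := by
  induction n with
  | zero => simp [prodRev]
  | succ n ih =>
    rw [prodRev, prodRev, ih, Finset.prod_range_succ, smul_mul_smul_comm, mul_comm]

theorem prodRev_congr {S T : ℕ → Matrix (Fin 2) (Fin 2) ℂ} {n : ℕ} (h : ∀ k < n, S k = T k) :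
    prodRev S n = prodRev T n := by
  induction n with
  | zero => rfl
  | succ n ih =>
    rw [prodRev, prodRev, h n n.lt_succ_self, ih fun k hk => h k (hk.trans n.lt_succ_self)]

theorem det_prodRev (T : ℕ → Matrix (Fin 2) (Fin 2) ℂ) (n : ℕ) :
    (prodRev T n).det = ∏ i ∈ Finset.range n, (T i).det := by
  induction n with
  | zero => simp [prodRev]
  | succ n ih => rw [prodRev, det_mul, ih, Finset.prod_range_succ, mul_comm]

/-- Products of the matrices `α • T(λ)` stay here, where traces are real: hence `A` is real. -/
def conjSwapSubmonoid : Submonoid (Matrix (Fin 2) (Fin 2) ℂ) where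
  carrier := {M | M 1 1 = conj (M 0 0) ∧ M 1 0 = conj (M 0 1)}
  mul_mem' := by
    rintro M N ⟨hM₁, hM₂⟩ ⟨hN₁, hN₂⟩
    constructor <;> simp only [mul_apply, Fin.sum_univ_two, hM₁, hM₂, hN₁, hN₂, map_add, map_mul,
      Complex.conj_conj] <;> ring
  one_mem' := by simp

theorem smul_transferM_mem_conjSwapSubmonoid {a : ℂ} (b : ℂ) (d l : ℝ) (ha : a ≠ 0) :
    a • transferM a b d l ∈ conjSwapSubmonoid := by
  rw [transferM, smul_smul, mul_inv_cancel₀ ha, one_smul]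
  refine ⟨?_, by simp⟩
  simp [← Complex.exp_conj]

theorem trace_im_eq_zero_of_mem_conjSwapSubmonoid {M : Matrix (Fin 2) (Fin 2) ℂ}
    (hM : M ∈ conjSwapSubmonoid) : M.trace.im = 0 := by
  rw [trace_fin_two, hM.1, Complex.add_im, Complex.conj_im, add_neg_cancel]

section TransferProducts

variable (αs βs : ℕ → ℂ) (Δs : ℕ → ℝ) (l : ℝ) (n : ℕ)

theorem det_prodRev_transferM (hα : ∀ k < n, αs k ≠ 0)
    (hαβ : ∀ k < n, ‖αs k‖ ^ 2 + ‖βs k‖ ^ 2 = 1) :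
    (prodRev (fun k => transferM (αs k) (βs k) (Δs k) l) n).det =
      conj (∏ i ∈ Finset.range n, αs i) / ∏ i ∈ Finset.range n, αs i := by
  rw [det_prodRev, map_prod, ← Finset.prod_div_distrib]
  exact Finset.prod_congr rfl fun k hk =>
    det_transferM _ _ (hα k (Finset.mem_range.mp hk)) (hαβ k (Finset.mem_range.mp hk))

theorem trace_prodRev_transferM (hα : ∀ k < n, αs k ≠ 0) :
    (prodRev (fun k => transferM (αs k) (βs k) (Δs k) l) n).trace =
      2 * Adef αs (fun k => transferM (αs k) (βs k) (Δs k) l) n / ∏ i ∈ Finset.range n, αs i := by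
  set p := ∏ i ∈ Finset.range n, αs i
  set P := prodRev (fun k => transferM (αs k) (βs k) (Δs k) l) n
  have hreal : (p * P.trace).im = 0 := by
    rw [← smul_eq_mul, ← trace_smul, ← prodRev_smul]
    exact trace_im_eq_zero_of_mem_conjSwapSubmonoid <| prodRev_mem _ fun k hk =>
      smul_transferM_mem_conjSwapSubmonoid (βs k) (Δs k) l (hα k hk)
  have hcast : ((p * P.trace).re : ℂ) = p * P.trace := Complex.ext rfl (by simp [hreal])
  have hhalf (z : ℂ) : ((1 / 2 : ℂ) * z).re = 1 / 2 * z.re := by simp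
  rw [eq_div_iff (prod_range_ne_zero hα), Adef, mul_assoc, hhalf]
  push_cast
  rw [hcast]
  ring

end TransferProducts

theorem Matrix.ker_mulVecLin_eq_span_singleton {K : Type*} [Field K]
    {M : Matrix (Fin 2) (Fin 2) K} (hM : M ≠ 0) {v : Fin 2 → K} (hv : v ≠ 0) (hMv : M *ᵥ v = 0) :
    LinearMap.ker M.mulVecLin = Submodule.span K {v} := by
  refine (Submodule.eq_of_le_of_finrank_le ((Submodule.span_singleton_le_iff_mem _ _).mpr hMv)
    ?_).symm
  have hrange : LinearMap.range M.mulVecLin ≠ ⊥ := by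
    rwa [ne_eq, LinearMap.range_eq_bot, ← Matrix.toLin'_apply',
      map_eq_zero_iff _ Matrix.toLin'.injective]
  have hdim := LinearMap.finrank_range_add_finrank_ker M.mulVecLin
  rw [Module.finrank_fin_fun] at hdim
  rw [finrank_span_singleton hv]
  have := Submodule.finrank_eq_zero.not.mpr hrange
  omega

section Orbit

variable {T : ℤ → Matrix (Fin 2) (Fin 2) ℂ} {v : ℤ → Fin 2 → ℂ}
  (hv : ∀ x, v (x + 1) = T x *ᵥ v x)
include hv

theorem orbit_add_natCast (c : ℤ) (n : ℕ) :
    v (c + n) = prodRev (fun j => T (c + j)) n *ᵥ v c := by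
  induction n with
  | zero => simp [prodRev]
  | succ n ih => rw [Nat.cast_succ, ← add_assoc, hv, ih, prodRev, mulVec_mulVec]

theorem orbit_add_period {S : ℕ → Matrix (Fin 2) (Fin 2) ℂ} {c : ℤ} {n : ℕ}
    (hTS : ∀ j < n, T (c + j) = S j) : v (c + n) = prodRev S n *ᵥ v c := by
  rw [orbit_add_natCast hv, prodRev_congr hTS]

theorem orbit_natCast (n : ℕ) : v n = prodZpos T n *ᵥ v 0 := by
  induction n with
  | zero => simp [prodZpos]
  | succ n ih => rw [Nat.cast_succ, hv, ih, prodZpos, mulVec_mulVec]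

theorem orbit_neg_natCast (hT : ∀ x, IsUnit (T x)) (n : ℕ) :
    v (-n) = prodZneg T n *ᵥ v 0 := by
  induction n with
  | zero => simp [prodZneg]
  | succ n ih =>
    have hstep := hv (-(n + 1 : ℕ))
    rw [show (-(n + 1 : ℕ) : ℤ) + 1 = -n by push_cast; ring, ih] at hstep
    rw [prodZneg, ← mulVec_mulVec, hstep, mulVec_mulVec,
      nonsing_inv_mul _ ((isUnit_iff_isUnit_det _).mp (hT _)), one_mulVec]

theorem orbit_eq_zero (hT : ∀ x, IsUnit (T x)) (h0 : v 0 = 0) (x : ℤ) : v x = 0 := by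
  obtain ⟨n, rfl | rfl⟩ := Int.eq_nat_or_neg x
  · rw [orbit_natCast hv, h0, mulVec_zero]
  · rw [orbit_neg_natCast hv hT, h0, mulVec_zero]

end Orbit

theorem isUnit_prodZpos {T : ℤ → Matrix (Fin 2) (Fin 2) ℂ} (hT : ∀ x, IsUnit (T x)) (n : ℕ) :
    IsUnit (prodZpos T n) := by
  induction n with
  | zero => exact isUnit_one
  | succ n ih => exact (hT n).mul ih

theorem isUnit_prodZneg {T : ℤ → Matrix (Fin 2) (Fin 2) ℂ} (hT : ∀ x, IsUnit (T x)) (n : ℕ) :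
    IsUnit (prodZneg T n) := by
  induction n with
  | zero => exact isUnit_one
  | succ n ih => exact (isUnit_nonsing_inv_iff.mpr (hT _)).mul ih

theorem transferM_mulVec_eq {a b : ℂ} {d l : ℝ} (ha : a ≠ 0) (hab : ‖a‖ ^ 2 + ‖b‖ ^ 2 = 1)
    {q : Fin 2 → ℂ} {p₀ r₁ : ℂ}
    (h₀ : (coinM a b d *ᵥ q) 0 = Complex.exp (Complex.I * l) * p₀)
    (h₁ : (coinM a b d *ᵥ q) 1 = Complex.exp (Complex.I * l) * r₁) :
    transferM a b d l *ᵥ ![p₀, q 1] = ![q 0, r₁] := by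
  have hl : Complex.exp (Complex.I * l) =
      Complex.exp (Complex.I * (l - d)) * Complex.exp (Complex.I * d) := by
    rw [← Complex.exp_add]; ring_nf
  have hinv : Complex.exp (-(Complex.I * (l - d))) * Complex.exp (Complex.I * (l - d)) = 1 := by
    rw [← Complex.exp_add, neg_add_cancel, Complex.exp_zero]
  have hab' : a * conj a + b * conj b = 1 := by
    rw [Complex.mul_conj', Complex.mul_conj']; exact_mod_cast hab
  have hd := Complex.exp_ne_zero (Complex.I * d)
  have hld := Complex.exp_ne_zero (Complex.I * (l - d))
  simp only [coinM, mulVec, dotProduct, Fin.sum_univ_two, Matrix.smul_apply, of_apply, cons_val',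
    cons_val_fin_one, cons_val_zero, cons_val_one, smul_eq_mul, hl] at h₀ h₁
  ext i
  fin_cases i <;>
    simp only [transferM, mulVec, dotProduct, Fin.sum_univ_two, Matrix.smul_apply, of_apply,
      cons_val', cons_val_fin_one, cons_val_zero, cons_val_one, smul_eq_mul, Fin.zero_eta,
      Fin.mk_one] <;> field_simp
  · refine mul_left_cancel₀ hd ?_
    linear_combination -h₀
  · refine mul_left_cancel₀ (mul_ne_zero hld hd) ?_
    linear_combination conj b * h₀ + a * h₁ + Complex.exp (Complex.I * d) * q 1 * (hinv - hab')

theorem isUnit_transferM {a b : ℂ} (d l : ℝ) (ha : a ≠ 0) (hab : ‖a‖ ^ 2 + ‖b‖ ^ 2 = 1) :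
    IsUnit (transferM a b d l) := by
  rw [isUnit_iff_isUnit_det, det_transferM d l ha hab, isUnit_iff_ne_zero]
  exact div_ne_zero ((map_ne_zero _).mpr ha) ha

theorem transferM_eq_of_periodic {α β : ℤ → ℂ} {Δ : ℤ → ℝ} {αs βs : ℕ → ℂ} {Δs : ℕ → ℝ}
    {x₀ x : ℤ} {n : ℕ} (l : ℝ)
    (hper : α x = αs ((x - x₀) % (n : ℤ)).toNat ∧ β x = βs ((x - x₀) % (n : ℤ)).toNat ∧
      Δ x = Δs ((x - x₀) % (n : ℤ)).toNat)
    {m : ℤ} {j : ℕ} (hj : j < n) (hx : x = x₀ + m * n + j) :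
    transferM (α x) (β x) (Δ x) l = transferM (αs j) (βs j) (Δs j) l := by
  have hidx : ((x - x₀) % (n : ℤ)).toNat = j := by
    rw [hx, show x₀ + m * n + j - x₀ = j + m * n by ring, Int.add_mul_emod_self_right,
      Int.emod_eq_of_lt (by positivity) (by exact_mod_cast hj), Int.toNat_natCast]
  rw [hper.1, hper.2.1, hper.2.2, hidx]

theorem tendsto_add_mul_cofinite (c : ℤ) {k : ℤ} (hk : k ≠ 0) :
    Tendsto (fun m : ℕ => c + m * k) atTop cofinite := by
  rw [← Nat.cofinite_eq_atTop]
  refine Function.Injective.tendsto_cofinite fun a b h => ?_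
  exact_mod_cast mul_right_cancel₀ hk (add_left_cancel h)

def transferVec (Ψ : ℤ → Fin 2 → ℂ) (x : ℤ) : Fin 2 → ℂ := ![Ψ (x - 1) 0, Ψ x 1]

theorem transferVec_add_one {α β : ℤ → ℂ} {Δ : ℤ → ℝ} (hα : ∀ x, α x ≠ 0)
    (hαβ : ∀ x, ‖α x‖ ^ 2 + ‖β x‖ ^ 2 = 1) {l : ℝ} {Ψ : ℤ → Fin 2 → ℂ}
    (hU : Uact (fun x => coinM (α x) (β x) (Δ x)) Ψ = Complex.exp (Complex.I * l) • Ψ) (x : ℤ) :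
    transferVec Ψ (x + 1) = transferM (α x) (β x) (Δ x) l *ᵥ transferVec Ψ x := by
  have h₀ := congrFun (congrFun hU (x - 1)) 0
  have h₁ := congrFun (congrFun hU (x + 1)) 1
  simp only [Uact, sub_add_cancel, add_sub_cancel_right, Pi.smul_apply, smul_eq_mul,
    cons_val_zero, cons_val_one] at h₀ h₁
  rw [transferVec, transferVec, add_sub_cancel_right]
  exact (transferM_mulVec_eq (hα x) (hαβ x) h₀ h₁).symm

theorem eq_zero_of_transferVec_eq_zero {Ψ : ℤ → Fin 2 → ℂ} (h : transferVec Ψ = 0) : Ψ = 0 := by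
  ext x i
  fin_cases i
  · simpa [transferVec] using congrFun (congrFun h (x + 1)) 0
  · simpa [transferVec] using congrFun (congrFun h x) 1

theorem tendsto_transferVec_cofinite {Ψ : ℤ → Fin 2 → ℂ} (hΨ : SqSummable Ψ) :
    Tendsto (transferVec Ψ) cofinite (𝓝 0) := by
  have hcomp (i : Fin 2) : Tendsto (fun x => Ψ x i) cofinite (𝓝 0) := by
    have hsq : Tendsto (fun x => ‖Ψ x i‖ ^ 2) cofinite (𝓝 0) :=
      squeeze_zero (fun _ => by positivity)
        (fun x => by fin_cases i <;> simp)
        hΨ.tendsto_cofinite_zero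
    simpa [tendsto_zero_iff_norm_tendsto_zero, Real.sqrt_sq (norm_nonneg _)] using hsq.sqrt
  rw [tendsto_pi_nhds]
  intro i
  fin_cases i
  · exact (hcomp 0).comp ((sub_left_injective (b := (1 : ℤ))).tendsto_cofinite)
  · exact hcomp 1

theorem mulVec_ne_zero_of_isUnit {K : Type*} [Field K] {n : Type*} [Fintype n] [DecidableEq n]
    {M : Matrix n n K} (hM : IsUnit M) {v : n → K} (hv : v ≠ 0) : M *ᵥ v ≠ 0 :=
  ((mulVec_injective_iff_isUnit.mpr hM).ne_iff' (mulVec_zero M)).mpr hv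

section Sides

variable {α β : ℤ → ℂ} {Δ : ℤ → ℝ} {l : ℝ}
  (hT : ∀ x, IsUnit (transferM (α x) (β x) (Δ x) l)) {v : ℤ → Fin 2 → ℂ}
  (hv : ∀ x, v (x + 1) = transferM (α x) (β x) (Δ x) l *ᵥ v x)
  (hlim : Tendsto v cofinite (𝓝 0)) (hv0 : v 0 ≠ 0)
include hT hv hlim hv0

theorem ker_plus_eq_span {xp : ℤ} (hxp : 0 ≤ xp) {np : ℕ} (hnp : 0 < np) {αp βp : ℕ → ℂ}
    {Δp : ℕ → ℝ} (hαp : ∀ k < np, αp k ≠ 0) (hαβp : ∀ k < np, ‖αp k‖ ^ 2 + ‖βp k‖ ^ 2 = 1)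
    (hper_p : ∀ x : ℤ, xp ≤ x →
      α x = αp ((x - xp) % (np : ℤ)).toNat ∧ β x = βp ((x - xp) % (np : ℤ)).toNat ∧
        Δ x = Δp ((x - xp) % (np : ℤ)).toNat) :
    LinearMap.ker
        ((prodRev (fun k => transferM (αp k) (βp k) (Δp k) l) np -
            zetaLT αp (fun k => transferM (αp k) (βp k) (Δp k) l) np • 1) *
          prodZpos (fun x => transferM (α x) (β x) (Δ x) l) xp.toNat).mulVecLin =
      Submodule.span ℂ {v 0} := by
  have hvxp : v xp = prodZpos (fun x => transferM (α x) (β x) (Δ x) l) xp.toNat *ᵥ v 0 := by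
    rw [← orbit_natCast hv, Int.toNat_of_nonneg hxp]
  have hstep (m : ℕ) : v (xp + (m + 1 : ℕ) * np) =
      prodRev (fun k => transferM (αp k) (βp k) (Δp k) l) np *ᵥ v (xp + m * np) := by
    rw [show xp + ((m + 1 : ℕ) : ℤ) * np = xp + m * np + np by push_cast; ring]
    refine orbit_add_period hv fun j hj => transferM_eq_of_periodic l (hper_p _ ?_) hj rfl
    have : (0 : ℤ) ≤ m * np + j := by positivity
    linarith
  have hvxp0 : v xp ≠ 0 := hvxp ▸ mulVec_ne_zero_of_isUnit (isUnit_prodZpos hT _) hv0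
  obtain ⟨hne, hker⟩ := sub_zetaLT_ne_zero_and_mulVec_eq_zero (prod_range_ne_zero hαp)
    (trace_prodRev_transferM _ _ _ _ _ hαp) (det_prodRev_transferM _ _ _ _ _ hαp hαβp) hstep
    (hlim.comp (tendsto_add_mul_cofinite xp (by positivity))) (by simpa using hvxp0)
  simp only [Function.comp_apply, Nat.cast_zero, zero_mul, add_zero] at hker
  refine ker_mulVecLin_eq_span_singleton ((isUnit_prodZpos hT _).mul_left_eq_zero.not.mpr hne)
    hv0 ?_
  rw [← mulVec_mulVec, ← hvxp, hker]

theorem ker_minus_eq_span {xm : ℤ} (hxm : xm ≤ 0) {nm : ℕ} (hnm : 0 < nm) {αm βm : ℕ → ℂ}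
    {Δm : ℕ → ℝ} (hαm : ∀ k < nm, αm k ≠ 0) (hαβm : ∀ k < nm, ‖αm k‖ ^ 2 + ‖βm k‖ ^ 2 = 1)
    (hper_m : ∀ x : ℤ, x < xm →
      α x = αm ((x - xm) % (nm : ℤ)).toNat ∧ β x = βm ((x - xm) % (nm : ℤ)).toNat ∧
        Δ x = Δm ((x - xm) % (nm : ℤ)).toNat) :
    LinearMap.ker
        ((prodRev (fun k => transferM (αm k) (βm k) (Δm k) l) nm -
            zetaGT αm (fun k => transferM (αm k) (βm k) (Δm k) l) nm • 1) *
          prodZneg (fun x => transferM (α x) (β x) (Δ x) l) xm.natAbs).mulVecLin =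
      Submodule.span ℂ {v 0} := by
  have hvxm : v xm = prodZneg (fun x => transferM (α x) (β x) (Δ x) l) xm.natAbs *ᵥ v 0 := by
    rw [← orbit_neg_natCast hv hT, show -(xm.natAbs : ℤ) = xm by omega]
  have hstep (m : ℕ) : v (xm + m * -(nm : ℤ)) =
      prodRev (fun k => transferM (αm k) (βm k) (Δm k) l) nm *ᵥ
        v (xm + (m + 1 : ℕ) * -(nm : ℤ)) := by
    rw [show xm + (m : ℤ) * -(nm : ℤ) = xm + ((m + 1 : ℕ) : ℤ) * -(nm : ℤ) + nm by push_cast; ring]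
    refine orbit_add_period hv fun j hj =>
      transferM_eq_of_periodic l (hper_m _ ?_) hj (m := -((m + 1 : ℕ) : ℤ)) (by ring)
    have : (nm : ℤ) ≤ ((m + 1 : ℕ) : ℤ) * nm := le_mul_of_one_le_left (by positivity) (by omega)
    have : (j : ℤ) < nm := by exact_mod_cast hj
    linarith
  have hvxm0 : v xm ≠ 0 := hvxm ▸ mulVec_ne_zero_of_isUnit (isUnit_prodZneg hT _) hv0
  obtain ⟨hne, hker⟩ := sub_zetaGT_ne_zero_and_mulVec_eq_zero (prod_range_ne_zero hαm)
    (trace_prodRev_transferM _ _ _ _ _ hαm) (det_prodRev_transferM _ _ _ _ _ hαm hαβm) hstep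
    (hlim.comp (tendsto_add_mul_cofinite xm (by omega))) (by simpa using hvxm0)
  simp only [Nat.cast_zero, zero_mul, add_zero] at hker
  refine ker_mulVecLin_eq_span_singleton ((isUnit_prodZneg hT _).mul_left_eq_zero.not.mpr hne)
    hv0 ?_
  rw [← mulVec_mulVec, ← hvxm, hker]

end Sides

theorem ker_plus_eq_ker_minus_of_eigenvalue_general
    (α β : ℤ → ℂ) (Δ : ℤ → ℝ)
    (hα : ∀ x, α x ≠ 0)
    (hαβ : ∀ x, ‖α x‖ ^ 2 + ‖β x‖ ^ 2 = 1)
    (xp xm : ℤ) (hxp : 0 ≤ xp) (hxm : xm ≤ 0)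
    (np nm : ℕ) (hnp : 0 < np) (hnm : 0 < nm)
    (αp βp : ℕ → ℂ) (Δp : ℕ → ℝ) (αm βm : ℕ → ℂ) (Δm : ℕ → ℝ)
    (hαp : ∀ k < np, αp k ≠ 0)
    (hαβp : ∀ k < np, ‖αp k‖ ^ 2 + ‖βp k‖ ^ 2 = 1)
    (hαm : ∀ k < nm, αm k ≠ 0)
    (hαβm : ∀ k < nm, ‖αm k‖ ^ 2 + ‖βm k‖ ^ 2 = 1)
    (hper_p : ∀ x : ℤ, xp ≤ x →
      α x = αp ((x - xp) % (np : ℤ)).toNat ∧ β x = βp ((x - xp) % (np : ℤ)).toNat ∧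
        Δ x = Δp ((x - xp) % (np : ℤ)).toNat)
    (hper_m : ∀ x : ℤ, x < xm →
      α x = αm ((x - xm) % (nm : ℤ)).toNat ∧ β x = βm ((x - xm) % (nm : ℤ)).toNat ∧
        Δ x = Δm ((x - xm) % (nm : ℤ)).toNat)
    (l : ℝ)
    (hσ : ∃ Ψ : ℤ → Fin 2 → ℂ, SqSummable Ψ ∧ Ψ ≠ 0 ∧
        Uact (fun x => coinM (α x) (β x) (Δ x)) Ψ = Complex.exp (Complex.I * l) • Ψ) :
    LinearMap.ker
        ((prodRev (fun k => transferM (αp k) (βp k) (Δp k) l) np -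
            zetaLT αp (fun k => transferM (αp k) (βp k) (Δp k) l) np • 1) *
          prodZpos (fun x => transferM (α x) (β x) (Δ x) l) xp.toNat).mulVecLin =
      LinearMap.ker
        ((prodRev (fun k => transferM (αm k) (βm k) (Δm k) l) nm -
            zetaGT αm (fun k => transferM (αm k) (βm k) (Δm k) l) nm • 1) *
          prodZneg (fun x => transferM (α x) (β x) (Δ x) l) xm.natAbs).mulVecLin := by
  obtain ⟨Ψ, hsum, hΨ0, hU⟩ := hσ
  have hT (x : ℤ) : IsUnit (transferM (α x) (β x) (Δ x) l) := isUnit_transferM _ _ (hα x) (hαβ x)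
  have hv := transferVec_add_one hα hαβ hU
  have hlim := tendsto_transferVec_cofinite hsum
  have hv0 : transferVec Ψ 0 ≠ 0 := fun h0 =>
    hΨ0 (eq_zero_of_transferVec_eq_zero (funext (orbit_eq_zero hv hT h0)))
  rw [ker_plus_eq_span hT hv hlim hv0 hxp hnp hαp hαβp hper_p,
    ker_minus_eq_span hT hv hlim hv0 hxm hnm hαm hαβm hper_m]

/-- If `e^{iλ} ∈ σ(U)`, then the two one-dimensional subspaces of `ℂ²` appearing in the main
theorem coincide:
`ker((∏_{i=0}^{n_+−1} T_i^+ − ζ_+^<·I)·T_+) = ker((∏_{i=0}^{n_−−1} T_i^− − ζ_−^>·I)·T_−)`. -/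
theorem ker_plus_eq_ker_minus_of_eigenvalue
    (α β : ℤ → ℂ) (Δ : ℤ → ℝ)
    (hα : ∀ x, α x ≠ 0)
    (hαβ : ∀ x, ‖α x‖ ^ 2 + ‖β x‖ ^ 2 = 1)
    (hΔ : ∀ x, 0 ≤ Δ x ∧ Δ x < 2 * π)
    (xp xm : ℤ) (hxp : 0 ≤ xp) (hxm : xm ≤ 0)
    (np nm : ℕ) (hnp : 0 < np) (hnm : 0 < nm)
    (αp βp : ℕ → ℂ) (Δp : ℕ → ℝ) (αm βm : ℕ → ℂ) (Δm : ℕ → ℝ)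
    (hαp : ∀ k < np, αp k ≠ 0)
    (hαβp : ∀ k < np, ‖αp k‖ ^ 2 + ‖βp k‖ ^ 2 = 1)
    (hΔp : ∀ k < np, 0 ≤ Δp k ∧ Δp k < 2 * π)
    (hαm : ∀ k < nm, αm k ≠ 0)
    (hαβm : ∀ k < nm, ‖αm k‖ ^ 2 + ‖βm k‖ ^ 2 = 1)
    (hΔm : ∀ k < nm, 0 ≤ Δm k ∧ Δm k < 2 * π)
    (hper_p : ∀ x : ℤ, xp ≤ x →
      α x = αp ((x - xp) % (np : ℤ)).toNat ∧ β x = βp ((x - xp) % (np : ℤ)).toNat ∧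
        Δ x = Δp ((x - xp) % (np : ℤ)).toNat)
    (hper_m : ∀ x : ℤ, x < xm →
      α x = αm ((x - xm) % (nm : ℤ)).toNat ∧ β x = βm ((x - xm) % (nm : ℤ)).toNat ∧
        Δ x = Δm ((x - xm) % (nm : ℤ)).toNat)
    (l : ℝ) (hl : 0 ≤ l ∧ l < 2 * π)
    (hσ : ∃ Ψ : ℤ → Fin 2 → ℂ, SqSummable Ψ ∧ Ψ ≠ 0 ∧
        Uact (fun x => coinM (α x) (β x) (Δ x)) Ψ = Complex.exp (Complex.I * l) • Ψ) :
    LinearMap.ker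
        ((prodRev (fun k => transferM (αp k) (βp k) (Δp k) l) np -
            zetaLT αp (fun k => transferM (αp k) (βp k) (Δp k) l) np • 1) *
          prodZpos (fun x => transferM (α x) (β x) (Δ x) l) xp.toNat).mulVecLin =
      LinearMap.ker
        ((prodRev (fun k => transferM (αm k) (βm k) (Δm k) l) nm -
            zetaGT αm (fun k => transferM (αm k) (βm k) (Δm k) l) nm • 1) *
          prodZneg (fun x => transferM (α x) (β x) (Δ x) l) xm.natAbs).mulVecLin :=
  ker_plus_eq_ker_minus_of_eigenvalue_general α β Δ hα hαβ xp xm hxp hxm np nm hnp hnm αp βp Δp αm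
    βm Δm hαp hαβp hαm hαβm hper_p hper_m l hσ
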